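/- Let T be a tree, w a vertex of degree s ≥ 3 in T such that T - w has components T_1, ..., T_s, each of which is a path with the neighbor of w being an endpoint. Suppose each T_i is a path on n_i vertices with n_i ≡ m (mod m+1), where λ = 2cos(iπ/(m+1)) for coprime i, m+1. Then m(T, λ) = s - 1 = p(T) - 1. -/

import Mathlib

open scoped Classical

/-- Multiplicity of `lam` as an eigenvalue of a real symmetric matrix:
dimension of the kernel of `A - lam • 1`. -/
noncomputable def matMult {V : Type*} [Fintype V] [DecidableEq V]
    (A : Matrix V V ℝ) (lam : ℝ) : ℕ :=
  Module.finrank ℝ (LinearMap.ker (Matrix.toLin' (A - lam • (1 : Matrix V V ℝ))))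

/-- Adjacency matrix of a simple graph over ℝ. -/
noncomputable def adjM {V : Type*} [Fintype V] (G : SimpleGraph V) : Matrix V V ℝ :=
  fun i j => if G.Adj i j then 1 else 0

/-- Multiplicity of `lam` as an eigenvalue of the adjacency matrix of `G`. -/
noncomputable def gMult {V : Type*} [Fintype V] (G : SimpleGraph V) (lam : ℝ) : ℕ :=
  matMult (adjM G) lam

/-- Multiplicity of `lam` as an eigenvalue of the induced subgraph of `G` on `s`. -/
noncomputable def sMult {V : Type*} [Fintype V] (G : SimpleGraph V) (s : Set V) (lam : ℝ) : ℕ :=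
  gMult (G.induce s) lam

/-- Degree of a vertex, via the cardinality of its neighbor set. -/
noncomputable def deg {V : Type*} (G : SimpleGraph V) (v : V) : ℕ :=
  (G.neighborSet v).ncard

/-- Number of pendant (degree-1) vertices. -/
noncomputable def pendCount {V : Type*} (G : SimpleGraph V) : ℕ :=
  {v : V | deg G v = 1}.ncard

/-- Number of pendant vertices, with the paper's convention that a
single-vertex graph has `p = 2`. -/
noncomputable def pendCount' {V : Type*} (G : SimpleGraph V) : ℕ :=
  if Nat.card V ≤ 1 then 2 else pendCount G

/-- A graph is (isomorphic to) a path graph. -/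
def IsPathGraph {W : Type*} (H : SimpleGraph W) : Prop :=
  ∃ n : ℕ, Nonempty (H ≃g SimpleGraph.pathGraph n)

/-- The vertex sets (as subsets of `V`) of the connected components of `G - w`. -/
def compSupp {V : Type*} (G : SimpleGraph V) (w : V)
    (c : (G.induce {u | u ≠ w}).ConnectedComponent) : Set V :=
  Subtype.val '' c.supp

/-!
Write `lam = 2 cos θ` with `θ = iπ/(m+1)`. The sequence `sin (jθ)` obeys the recurrence
`u (j+2) = lam * u (j+1) - u j` of a path eigenvector, vanishes at `j = 0`, and vanishes at
`j = n+1` whenever `(m+1) ∣ n+1`, i.e. for every leg length `n ≡ m (mod m+1)`. Read along a leg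
from its pendant end, a `lam`-eigenvector of the spider is therefore `t · sin (jθ)` at the `j`-th
vertex and vanishes at the centre, which sits at position `n+1`. So it is determined by its values
`t_c` at the pendant ends, subject only to the equation at the centre, `∑ t_c sin (n_c θ) = 0`,
whose coefficients are all nonzero: the eigenspace has dimension `s - 1`. Each leg contributes
exactly one pendant vertex, its far end, and the centre has degree `s ≥ 3`.
-/

open SimpleGraph Matrix

lemma mem_ker_toLin'_sub_smul_one_iff {V : Type*} [Fintype V] [DecidableEq V]
    (A : Matrix V V ℝ) (lam : ℝ) (x : V → ℝ) :
    x ∈ LinearMap.ker (toLin' (A - lam • (1 : Matrix V V ℝ))) ↔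
      ∀ v, (A *ᵥ x) v = lam * x v := by
  simp [sub_eq_zero, funext_iff]

lemma finrank_ker_linearCombination_add_one {C : Type*} [Fintype C] {α : C → ℝ} {c₀ : C}
    (hα : α c₀ ≠ 0) :
    Module.finrank ℝ (LinearMap.ker (Fintype.linearCombination ℝ α)) + 1 = Fintype.card C := by
  have hsurj : Function.Surjective (Fintype.linearCombination ℝ α) := fun r =>
    ⟨Pi.single c₀ (r / α c₀), by simp [Fintype.linearCombination_apply, Pi.single_apply, hα]⟩
  have := LinearMap.finrank_range_add_finrank_ker (Fintype.linearCombination ℝ α)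
  rw [LinearMap.range_eq_top.mpr hsurj, finrank_top, Module.finrank_self,
    Module.finrank_fintype_fun_eq_card] at this
  omega

lemma mul_eq_mul_of_recurrence {lam : ℝ} {f g : ℕ → ℝ} {M : ℕ}
    (hf : ∀ j < M, f (j + 2) = lam * f (j + 1) - f j)
    (hg : ∀ j, g (j + 2) = lam * g (j + 1) - g j) (hf0 : f 0 = 0) (hg0 : g 0 = 0) :
    ∀ j ≤ M + 1, f j * g 1 = f 1 * g j := by
  intro j
  induction j using Nat.twoStepInduction with
  | zero => simp [hf0, hg0]
  | one => simp
  | more j ih₀ ih₁ =>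
    intro hj
    rw [hf j (by omega), hg j]
    linear_combination lam * ih₁ (by omega) - ih₀ (by omega)

namespace Real

lemma sin_nat_add_two_mul (θ : ℝ) (j : ℕ) :
    sin ((j + 2 : ℕ) * θ) = 2 * cos θ * sin ((j + 1 : ℕ) * θ) - sin (j * θ) := by
  have h₁ : ((j + 2 : ℕ) : ℝ) * θ = (j + 1 : ℕ) * θ + θ := by push_cast; ring
  have h₂ : (j : ℝ) * θ = (j + 1 : ℕ) * θ - θ := by push_cast; ring
  rw [h₁, h₂, sin_add, sin_sub]
  ring

lemma sin_nat_mul_ne_zero_of_sin_succ_mul_eq_zero {θ : ℝ} {n : ℕ} (hθ : sin θ ≠ 0)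
    (hn : sin ((n + 1 : ℕ) * θ) = 0) : sin (n * θ) ≠ 0 := by
  have hcos : cos ((n + 1 : ℕ) * θ) ≠ 0 := by
    intro h
    have := sin_sq_add_cos_sq ((n + 1 : ℕ) * θ)
    rw [hn, h] at this
    norm_num at this
  have : (n : ℝ) * θ = (n + 1 : ℕ) * θ - θ := by push_cast; ring
  rw [this, sin_sub, hn]
  simpa using mul_ne_zero hcos hθ

lemma sin_nat_mul_pi_div_pos {i d : ℕ} (hi : 0 < i) (hid : i < d) : 0 < sin (i * π / d) := by
  have hd : (0 : ℝ) < d := by exact_mod_cast hi.trans hid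
  refine sin_pos_of_pos_of_lt_pi (by positivity) ((div_lt_iff₀ hd).2 ?_)
  nlinarith [pi_pos, (by exact_mod_cast hid : (i : ℝ) < d)]

lemma sin_nat_mul_nat_mul_pi_div_eq_zero {N d : ℕ} (i : ℕ) (h : d ∣ N) :
    sin (N * (i * π / d)) = 0 := by
  obtain ⟨k, rfl⟩ := h
  rcases Nat.eq_zero_or_pos d with rfl | hd
  · simp
  rw [show ((d * k : ℕ) : ℝ) * (i * π / d) = (k * i : ℕ) * π by field_simp; push_cast; ring]
  exact sin_nat_mul_pi _

end Real

lemma sum_pathGraph_adj (N : ℕ) (f : ℕ → ℝ) (hf : f 0 = 0) (j : Fin N) :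
    ∑ k : Fin N, (if (pathGraph N).Adj j k then f (k + 1) else 0) =
      f j + if j.val + 1 < N then f (j + 2) else 0 := by
  have hsplit : ∀ k : ℕ, (if j.val + 1 = k ∨ k + 1 = j.val then f (k + 1) else 0) =
      (if k = j.val + 1 then f (j + 2) else 0) + (if k + 1 = j.val then f j else 0) := by
    intro k
    rcases eq_or_ne k (j + 1) with rfl | h₁
    · simp [show j.val + 1 + 1 ≠ j.val by omega]
    rcases eq_or_ne (k + 1) j with h₂ | h₂
    · simp [h₁, h₂]
    · simp [h₁, h₂, Ne.symm h₁]
  simp only [pathGraph_adj]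
  rw [Fin.sum_univ_eq_sum_range (fun k => if j.val + 1 = k ∨ k + 1 = j.val then f (k + 1) else 0),
    Finset.sum_congr rfl fun k _ => hsplit k, Finset.sum_add_distrib, Finset.sum_ite_eq',
    add_comm]
  obtain ⟨_ | j, hj⟩ := j
  · simp [hf]
  · simp [Finset.sum_ite_eq', Nat.lt_of_succ_lt hj]

def SimpleGraph.pathGraph.reverseIso (N : ℕ) : pathGraph N ≃g pathGraph N where
  toEquiv := Fin.revPerm
  map_rel_iff' := by intro u v; simp [pathGraph_adj]; omega

lemma adjM_mulVec_apply {V : Type*} [Fintype V] (G : SimpleGraph V) (x : V → ℝ) (v : V) :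
    (adjM G *ᵥ x) v = ∑ u, if G.Adj v u then x u else 0 := by
  simp [adjM, mulVec, dotProduct, ite_mul]

lemma deg_eq_adjM_mulVec_one {V : Type*} [Fintype V] (G : SimpleGraph V) (v : V) :
    (deg G v : ℝ) = (adjM G *ᵥ fun _ => 1) v := by
  change _ = (G.adjMatrix ℝ *ᵥ Function.const V 1) v
  rw [adjMatrix_mulVec_const_apply, mul_one, deg, Set.ncard_eq_toFinset_card']
  rfl

section Legs

variable {V : Type*} {T : SimpleGraph V} {w : V} {S : Set V} {N : ℕ}

/-- Position `0` is a virtual vertex carrying `0`: this boundary condition is what makes the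
values of an eigenvector along a leg a multiple of `sin (jθ)`. -/
def legSeq (x : V → ℝ) (w : V) (leg : Fin N → V) : ℕ → ℝ
  | 0 => 0
  | k + 1 => if h : k < N then x (leg ⟨k, h⟩) else x w

lemma legSeq_one (w : V) (leg : Fin N → V) (j : ℕ) :
    legSeq (fun _ => 1) w leg j = if j = 0 then 0 else 1 := by
  cases j <;> simp [legSeq]

lemma sum_ite_val_add_one_eq_legSeq (x : V → ℝ) (leg : Fin N → V) :
    ∑ k : Fin N, (if k.val + 1 = N then x (leg k) else 0) = legSeq x w leg N := by
  cases N with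
  | zero => simp [legSeq]
  | succ N =>
    rw [Fintype.sum_eq_single (Fin.last N) fun k hk =>
      if_neg fun h => hk (Fin.ext (by simpa using h))]
    simp [legSeq, Fin.last]

structure IsLeg (T : SimpleGraph V) (w : V) (S : Set V) (ψ : T.induce S ≃g pathGraph N) :
    Prop where
  center_not_mem : w ∉ S
  mem_or_eq_of_adj : ∀ v ∈ S, ∀ u, T.Adj v u → u ∈ S ∨ u = w
  adj_center_iff : ∀ v (hv : v ∈ S), T.Adj v w ↔ (ψ ⟨v, hv⟩).val + 1 = N

lemma IsLeg.adjM_mulVec_apply_symm [Fintype V] {ψ : T.induce S ≃g pathGraph N}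
    (h : IsLeg T w S ψ) (x : V → ℝ) (k : Fin N) :
    (adjM T *ᵥ x) (ψ.symm k) =
      legSeq x w (fun j => ψ.symm j) k + legSeq x w (fun j => ψ.symm j) (k + 2) := by
  set v := ψ.symm k
  have hinside : ∑ u : S, (if T.Adj v u then x u else 0) =
      ∑ j : Fin N, if (pathGraph N).Adj k j then legSeq x w (fun j => ψ.symm j) (j + 1) else 0 := by
    rw [← ψ.symm.toEquiv.sum_comp]
    refine Fintype.sum_congr _ _ fun j => ?_
    have : T.Adj v (ψ.symm j) ↔ (pathGraph N).Adj k j := ψ.symm.map_adj_iff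
    simp [legSeq, this]
  have houtside : ∑ u : {u // u ∉ S}, (if T.Adj v u then x u else 0) =
      if k.val + 1 = N then x w else 0 := by
    rw [Fintype.sum_eq_single ⟨w, h.center_not_mem⟩]
    · have := h.adj_center_iff v v.2
      simp_all [v]
    · intro u hu
      rw [if_neg]
      intro hadj
      exact hu (Subtype.ext ((h.mem_or_eq_of_adj v v.2 u hadj).resolve_left u.2))
  rw [adjM_mulVec_apply, ← Fintype.sum_subtype_add_sum_subtype (· ∈ S), hinside, houtside,
    sum_pathGraph_adj N _ rfl, add_assoc]
  congr 1
  by_cases hk : k.val + 1 < N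
  · simp [legSeq, hk, Nat.ne_of_lt hk]
  · simp [legSeq, show k.val + 1 = N by omega]

lemma pathGraph_endpoint_of_ncard_le_one [Finite V] (φ : T.induce S ≃g pathGraph N) {v : V}
    (hv : v ∈ S) (h : (T.neighborSet v ∩ S).ncard ≤ 1) :
    (φ ⟨v, hv⟩).val = 0 ∨ (φ ⟨v, hv⟩).val + 1 = N := by
  by_contra! hj
  set j := φ ⟨v, hv⟩
  have hmem : ∀ k : Fin N, (pathGraph N).Adj j k → ((φ.symm k) : V) ∈ T.neighborSet v ∩ S :=
    fun k hk => ⟨by simpa [j] using φ.symm.map_adj_iff.2 hk, (φ.symm k).2⟩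
  have := ((Set.ncard_le_one (Set.toFinite _)).1 h)
    _ (hmem ⟨j - 1, by omega⟩ (by simp [pathGraph_adj]; omega))
    _ (hmem ⟨j + 1, by omega⟩ (by simp [pathGraph_adj]))
  simpa using congrArg Fin.val (φ.symm.injective (Subtype.ext this))

end Legs

section Components

variable {V : Type*} {T : SimpleGraph V} {w : V} {c : (T.induce {u | u ≠ w}).ConnectedComponent}

lemma mem_compSupp_iff {v : V} (hv : v ≠ w) :
    v ∈ compSupp T w c ↔ (T.induce {u | u ≠ w}).connectedComponentMk ⟨v, hv⟩ = c :=
  ⟨by rintro ⟨⟨v', hv'⟩, hm, rfl⟩; exact hm, fun h => ⟨⟨v, hv⟩, h, rfl⟩⟩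

lemma ne_of_mem_compSupp {v : V} (hv : v ∈ compSupp T w c) : v ≠ w := by
  obtain ⟨⟨v', hv'⟩, _, rfl⟩ := hv
  exact hv'

lemma eq_of_mem_compSupp {c' : (T.induce {u | u ≠ w}).ConnectedComponent} {v : V}
    (h : v ∈ compSupp T w c) (h' : v ∈ compSupp T w c') : c = c' :=
  ((mem_compSupp_iff (ne_of_mem_compSupp h)).1 h).symm.trans
    ((mem_compSupp_iff (ne_of_mem_compSupp h)).1 h')

lemma mem_compSupp_of_adj {u v : V} (hv : v ∈ compSupp T w c) (hu : u ≠ w) (hadj : T.Adj v u) :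
    u ∈ compSupp T w c := by
  rw [mem_compSupp_iff (ne_of_mem_compSupp hv)] at hv
  rw [mem_compSupp_iff hu, ← hv]
  exact ConnectedComponent.sound (Adj.reachable (G := T.induce {u | u ≠ w}) hadj.symm)

lemma exists_adj_center_mem_compSupp (hT : T.Connected)
    (c : (T.induce {u | u ≠ w}).ConnectedComponent) : ∃ a ∈ compSupp T w c, T.Adj w a := by
  obtain ⟨⟨v, hv⟩, hc⟩ := c.exists_rep
  obtain ⟨p⟩ := hT.preconnected v w
  suffices ∀ {u v} (p : T.Walk v u), v ∈ compSupp T w c → u = w →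
      ∃ a ∈ compSupp T w c, T.Adj w a from
    this p ((mem_compSupp_iff hv).2 hc) rfl
  intro u v p
  induction p with
  | nil => rintro hv rfl; exact absurd rfl (ne_of_mem_compSupp hv)
  | @cons a b _ hadj _ ih =>
    intro ha hu
    by_cases hb : b = w
    · subst hb; exact ⟨a, ha, hadj.symm⟩
    · exact ih (mem_compSupp_of_adj ha hb hadj) hu

lemma eq_of_adj_center_of_mem_compSupp (hT : T.IsAcyclic) {a b : V} (ha : a ∈ compSupp T w c)
    (hb : b ∈ compSupp T w c) (hwa : T.Adj w a) (hwb : T.Adj w b) : a = b := by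
  by_contra hab
  obtain ⟨q⟩ : (T.induce {u | u ≠ w}).Reachable ⟨b, hwb.ne'⟩ ⟨a, hwa.ne'⟩ :=
    ConnectedComponent.exact <| ((mem_compSupp_iff _).1 hb).trans ((mem_compSupp_iff _).1 ha).symm
  let q' : T.Walk b a := q.map (Embedding.induce _).toHom
  -- `w → b ⇝ a` avoids the edge `wa`, which is a bridge since `T` is acyclic
  have hbridge := isBridge_iff_forall_walk_mem_edges.1 (isAcyclic_iff_forall_isBridge.1 hT hwa)
    (.cons hwb q')
  rw [Walk.edges_cons, List.mem_cons, Sym2.eq_iff] at hbridge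
  rcases hbridge with (⟨-, rfl⟩ | ⟨h, -⟩) | h
  · exact hab rfl
  · exact hwb.ne h
  · obtain ⟨⟨u, hu⟩, -, huw⟩ := List.mem_map.1 <|
      (Walk.support_map _ _) ▸ Walk.fst_mem_support_of_mem_edges _ h
    exact hu huw

lemma isLeg_of_adj_last {N : ℕ} (hT : T.IsAcyclic) (ψ : T.induce (compSupp T w c) ≃g pathGraph N)
    {a : V} (ha : a ∈ compSupp T w c) (hwa : T.Adj w a) (hlast : (ψ ⟨a, ha⟩).val + 1 = N) :
    IsLeg T w (compSupp T w c) ψ where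
  center_not_mem h := ne_of_mem_compSupp h rfl
  mem_or_eq_of_adj v hv u hadj := by
    by_cases hu : u = w
    · exact .inr hu
    · exact .inl (mem_compSupp_of_adj hv hu hadj)
  adj_center_iff v hv := by
    constructor
    · intro hvw
      obtain rfl := eq_of_adj_center_of_mem_compSupp hT hv ha hvw.symm hwa
      exact hlast
    · intro hv'
      have : (⟨v, hv⟩ : compSupp T w c) = ⟨a, ha⟩ := ψ.injective (Fin.ext (by omega))
      obtain rfl : v = a := congrArg Subtype.val this
      exact hwa.symm

lemma exists_isLeg [Finite V] {N : ℕ} (hT : T.IsTree)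
    (φ : T.induce (compSupp T w c) ≃g pathGraph N)
    (hend : ∀ v ∈ compSupp T w c, T.Adj w v → (T.neighborSet v ∩ compSupp T w c).ncard ≤ 1) :
    ∃ ψ : T.induce (compSupp T w c) ≃g pathGraph N, IsLeg T w (compSupp T w c) ψ := by
  obtain ⟨a, ha, hwa⟩ := exists_adj_center_mem_compSupp hT.connected c
  rcases pathGraph_endpoint_of_ncard_le_one φ ha (hend a ha hwa) with h | h
  · refine ⟨φ.trans (pathGraph.reverseIso N), isLeg_of_adj_last hT.isAcyclic _ ha hwa ?_⟩
    have := (φ ⟨a, ha⟩).isLt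
    simp [pathGraph.reverseIso, h]
    omega
  · exact ⟨φ, isLeg_of_adj_last hT.isAcyclic φ ha hwa h⟩

end Components

section Spider

variable {V : Type*} {T : SimpleGraph V} {w : V}
  {n : (T.induce {u | u ≠ w}).ConnectedComponent → ℕ}
  {ψ : ∀ c, T.induce (compSupp T w c) ≃g pathGraph (n c)}

lemma pos_of_induce_compSupp_iso (ψ : ∀ c, T.induce (compSupp T w c) ≃g pathGraph (n c))
    (c : (T.induce {u | u ≠ w}).ConnectedComponent) : 0 < n c := by
  obtain ⟨⟨v, hv⟩, hc⟩ := c.exists_rep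
  exact Fin.pos_iff_nonempty.2 ⟨ψ c ⟨v, (mem_compSupp_iff hv).2 hc⟩⟩

lemma exists_symm_apply_eq (ψ : ∀ c, T.induce (compSupp T w c) ≃g pathGraph (n c)) {v : V}
    (hv : v ≠ w) : ∃ c k, ((ψ c).symm k : V) = v :=
  ⟨_, ψ _ ⟨v, (mem_compSupp_iff hv).2 rfl⟩, by simp⟩

variable [Fintype V]

lemma sum_eq_add_sum_legs (ψ : ∀ c, T.induce (compSupp T w c) ≃g pathGraph (n c)) (g : V → ℝ) :
    ∑ v, g v = g w + ∑ c, ∑ k, g ((ψ c).symm k) := by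
  rw [← Finset.add_sum_erase _ _ (Finset.mem_univ w),
    ← Fintype.sum_sigma fun p : Σ c, Fin (n c) => g ((ψ p.1).symm p.2), eq_comm]
  congr 1
  refine Finset.sum_bij (fun p _ => ((ψ p.1).symm p.2 : V)) (fun p _ => ?_) ?_ (fun v hv => ?_)
    (fun _ _ => rfl)
  · exact Finset.mem_erase.2 ⟨ne_of_mem_compSupp ((ψ p.1).symm p.2).2, Finset.mem_univ _⟩
  · rintro ⟨c, k⟩ - ⟨c', k'⟩ - h
    obtain rfl := eq_of_mem_compSupp ((ψ c).symm k).2 (h ▸ ((ψ c').symm k').2)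
    simpa using (ψ c).symm.injective (Subtype.ext h)
  · obtain ⟨c, k, rfl⟩ := exists_symm_apply_eq ψ (Finset.ne_of_mem_erase hv)
    exact ⟨⟨c, k⟩, Finset.mem_univ _, rfl⟩

lemma adjM_mulVec_apply_center (hleg : ∀ c, IsLeg T w (compSupp T w c) (ψ c)) (x : V → ℝ) :
    (adjM T *ᵥ x) w = ∑ c, legSeq x w (fun k => (ψ c).symm k) (n c) := by
  rw [adjM_mulVec_apply, sum_eq_add_sum_legs ψ, if_neg T.irrefl, zero_add]
  refine Fintype.sum_congr _ _ fun c => ?_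
  have hadj : ∀ k, T.Adj w ((ψ c).symm k) ↔ k.val + 1 = n c := fun k => by
    rw [adj_comm]; simpa using (hleg c).adj_center_iff _ ((ψ c).symm k).2
  simp_rw [hadj]
  exact sum_ite_val_add_one_eq_legSeq _ _

lemma deg_center (hleg : ∀ c, IsLeg T w (compSupp T w c) (ψ c)) :
    deg T w = Fintype.card (T.induce {u | u ≠ w}).ConnectedComponent := by
  have := deg_eq_adjM_mulVec_one T w
  rw [adjM_mulVec_apply_center hleg] at this
  simp only [legSeq_one, (pos_of_induce_compSupp_iso ψ _).ne', if_false, Finset.sum_const,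
    Finset.card_univ, nsmul_eq_mul, mul_one] at this
  exact_mod_cast this

lemma deg_symm_apply (hleg : ∀ c, IsLeg T w (compSupp T w c) (ψ c))
    (c : (T.induce {u | u ≠ w}).ConnectedComponent) (k : Fin (n c)) :
    deg T ((ψ c).symm k) = if k.val = 0 then 1 else 2 := by
  have := deg_eq_adjM_mulVec_one T ((ψ c).symm k)
  rw [(hleg c).adjM_mulVec_apply_symm, legSeq_one, legSeq_one, if_neg (by omega : k.val + 2 ≠ 0)]
    at this
  split_ifs at this ⊢ <;> norm_num at this <;> exact_mod_cast this

lemma pendCount_eq_card (hleg : ∀ c, IsLeg T w (compSupp T w c) (ψ c)) (hw : deg T w ≠ 1) :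
    pendCount T = Fintype.card (T.induce {u | u ≠ w}).ConnectedComponent := by
  have hpend : {v | deg T v = 1} =
      Set.range fun c => ((ψ c).symm ⟨0, pos_of_induce_compSupp_iso ψ c⟩ : V) := by
    ext v
    constructor
    · intro hv
      obtain ⟨c, k, rfl⟩ := exists_symm_apply_eq ψ fun h : v = w => hw (h ▸ hv)
      have hk : k.val = 0 := by
        change deg T _ = 1 at hv
        rw [deg_symm_apply hleg] at hv
        split_ifs at hv with h <;> simp_all
      exact ⟨c, congrArg (fun k => ((ψ c).symm k : V)) (Fin.ext hk.symm)⟩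
    · rintro ⟨c, rfl⟩
      simp [deg_symm_apply hleg]
  rw [pendCount, hpend, Set.ncard_range_of_injective, Nat.card_eq_fintype_card]
  intro c c' h
  exact eq_of_mem_compSupp ((ψ c).symm _).2 (by simp only at h; rw [h]; exact ((ψ c').symm _).2)

end Spider

section Eigenvectors

open Real

variable {V : Type*} [Fintype V] {T : SimpleGraph V} {w : V}
  {n : (T.induce {u | u ≠ w}).ConnectedComponent → ℕ}
  {ψ : ∀ c, T.induce (compSupp T w c) ≃g pathGraph (n c)} {θ : ℝ}

local notation "eigenspace" => LinearMap.ker (toLin' (adjM T - (2 * cos θ) • (1 : Matrix V V ℝ)))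

lemma legSeq_mul_sin_of_mem_ker (hleg : ∀ c, IsLeg T w (compSupp T w c) (ψ c)) {x : V → ℝ}
    (hx : x ∈ eigenspace) (c : (T.induce {u | u ≠ w}).ConnectedComponent) :
    ∀ j ≤ n c + 1, legSeq x w (fun k => (ψ c).symm k) j * sin θ =
      legSeq x w (fun k => (ψ c).symm k) 1 * sin (j * θ) := by
  rw [mem_ker_toLin'_sub_smul_one_iff] at hx
  have hrec : ∀ j < n c, legSeq x w (fun k => (ψ c).symm k) (j + 2) =
      2 * cos θ * legSeq x w (fun k => (ψ c).symm k) (j + 1) -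
        legSeq x w (fun k => (ψ c).symm k) j := by
    intro j hj
    have hval : legSeq x w (fun k => (ψ c).symm k) (j + 1) = x ((ψ c).symm ⟨j, hj⟩) := by
      simp [legSeq, hj]
    have := hx ((ψ c).symm ⟨j, hj⟩)
    rw [(hleg c).adjM_mulVec_apply_symm, ← hval] at this
    linarith
  simpa using mul_eq_mul_of_recurrence (g := fun j : ℕ => sin (j * θ)) hrec
    (sin_nat_add_two_mul θ) rfl (by simp)

lemma apply_center_eq_zero_of_mem_ker (hleg : ∀ c, IsLeg T w (compSupp T w c) (ψ c))
    (hθ : sin θ ≠ 0) (hn : ∀ c, sin ((n c + 1 : ℕ) * θ) = 0)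
    (c₀ : (T.induce {u | u ≠ w}).ConnectedComponent) {x : V → ℝ} (hx : x ∈ eigenspace) :
    x w = 0 := by
  have := legSeq_mul_sin_of_mem_ker hleg hx c₀ (n c₀ + 1) le_rfl
  rw [hn c₀, mul_zero] at this
  simpa [legSeq, hθ] using this

lemma eq_zero_of_mem_ker_of_forall_eq_zero (hleg : ∀ c, IsLeg T w (compSupp T w c) (ψ c))
    (hθ : sin θ ≠ 0) (hn : ∀ c, sin ((n c + 1 : ℕ) * θ) = 0)
    (c₀ : (T.induce {u | u ≠ w}).ConnectedComponent) {x : V → ℝ} (hx : x ∈ eigenspace)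
    (h₀ : ∀ c, x ((ψ c).symm ⟨0, pos_of_induce_compSupp_iso ψ c⟩) = 0) : x = 0 := by
  funext v
  by_cases hv : v = w
  · subst hv
    exact apply_center_eq_zero_of_mem_ker hleg hθ hn c₀ hx
  obtain ⟨c, k, rfl⟩ := exists_symm_apply_eq ψ hv
  have := legSeq_mul_sin_of_mem_ker hleg hx c (k + 1) (by omega)
  simpa [legSeq, pos_of_induce_compSupp_iso ψ c, h₀ c, hθ] using this

lemma sum_mul_sin_eq_zero_of_mem_ker (hleg : ∀ c, IsLeg T w (compSupp T w c) (ψ c))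
    (hθ : sin θ ≠ 0) (hn : ∀ c, sin ((n c + 1 : ℕ) * θ) = 0)
    (c₀ : (T.induce {u | u ≠ w}).ConnectedComponent) {x : V → ℝ} (hx : x ∈ eigenspace) :
    ∑ c, x ((ψ c).symm ⟨0, pos_of_induce_compSupp_iso ψ c⟩) * sin (n c * θ) = 0 := by
  have hw := (mem_ker_toLin'_sub_smul_one_iff _ _ _).1 hx w
  rw [adjM_mulVec_apply_center hleg, apply_center_eq_zero_of_mem_ker hleg hθ hn c₀ hx,
    mul_zero] at hw
  have hlast : ∀ c, x ((ψ c).symm ⟨0, pos_of_induce_compSupp_iso ψ c⟩) * sin (n c * θ) =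
      legSeq x w (fun k => (ψ c).symm k) (n c) * sin θ := fun c => by
    rw [legSeq_mul_sin_of_mem_ker hleg hx c (n c) (by omega)]
    simp [legSeq, pos_of_induce_compSupp_iso ψ c]
  simp_rw [hlast, ← Finset.sum_mul, hw, zero_mul]

lemma exists_mem_ker_of_sum_mul_sin_eq_zero (hleg : ∀ c, IsLeg T w (compSupp T w c) (ψ c))
    (hθ : sin θ ≠ 0) (hn : ∀ c, sin ((n c + 1 : ℕ) * θ) = 0)
    {s : (T.induce {u | u ≠ w}).ConnectedComponent → ℝ} (hs : ∑ c, s c * sin (n c * θ) = 0) :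
    ∃ x ∈ eigenspace, ∀ c, x ((ψ c).symm ⟨0, pos_of_induce_compSupp_iso ψ c⟩) = s c := by
  let x : V → ℝ := fun v => if h : v = w then 0 else
    s ((T.induce {u | u ≠ w}).connectedComponentMk ⟨v, h⟩) / sin θ *
      sin ((ψ _ ⟨v, (mem_compSupp_iff h).2 rfl⟩ + 1 : ℕ) * θ)
  have hx_leg : ∀ c v (hv : v ∈ compSupp T w c),
      x v = s c / sin θ * sin ((ψ c ⟨v, hv⟩ + 1 : ℕ) * θ) := by
    intro c v hv
    have hvw := ne_of_mem_compSupp hv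
    obtain rfl := (mem_compSupp_iff hvw).1 hv
    simp [x, hvw]
  have hseq : ∀ c, ∀ j ≤ n c + 1,
      legSeq x w (fun k => (ψ c).symm k) j = s c / sin θ * sin (j * θ) := by
    intro c j hj
    rcases j with _ | j
    · simp [legSeq]
    by_cases hjn : j < n c
    · simp [legSeq, hjn, hx_leg c _ ((ψ c).symm _).2]
    · obtain rfl : j = n c := by omega
      have := hn c
      push_cast at this
      simp [legSeq, this, x]
  refine ⟨x, (mem_ker_toLin'_sub_smul_one_iff _ _ _).2 fun v => ?_, fun c => ?_⟩
  · by_cases hv : v = w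
    · subst hv
      rw [adjM_mulVec_apply_center hleg, Finset.sum_congr rfl fun c _ => hseq c (n c) (by omega)]
      simp only [div_mul_eq_mul_div, ← Finset.sum_div, hs, zero_div]
      simp [x]
    · obtain ⟨c, k, rfl⟩ := exists_symm_apply_eq ψ hv
      rw [(hleg c).adjM_mulVec_apply_symm, hseq c k (by omega), hseq c (k + 2) (by omega),
        hx_leg c _ ((ψ c).symm k).2]
      simp only [Subtype.coe_eta, RelIso.apply_symm_apply, sin_nat_add_two_mul]
      ring
  · rw [hx_leg c _ ((ψ c).symm _).2]
    simp [hθ]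

theorem gMult_add_one_eq_card (hleg : ∀ c, IsLeg T w (compSupp T w c) (ψ c))
    (hθ : sin θ ≠ 0) (hn : ∀ c, sin ((n c + 1 : ℕ) * θ) = 0)
    (c₀ : (T.induce {u | u ≠ w}).ConnectedComponent) :
    gMult T (2 * cos θ) + 1 = Fintype.card (T.induce {u | u ≠ w}).ConnectedComponent := by
  let Θ : eigenspace →ₗ[ℝ] ((T.induce {u | u ≠ w}).ConnectedComponent → ℝ) :=
    (LinearMap.pi fun c => LinearMap.proj ((ψ c).symm ⟨0, pos_of_induce_compSupp_iso ψ c⟩ : V))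
      ∘ₗ Submodule.subtype _
  have hinj : Function.Injective Θ := by
    rw [← LinearMap.ker_eq_bot, Submodule.eq_bot_iff]
    rintro ⟨x, hx⟩ h₀
    exact Subtype.ext (eq_zero_of_mem_ker_of_forall_eq_zero hleg hθ hn c₀ hx (congrFun h₀))
  have hrange : LinearMap.range Θ =
      LinearMap.ker (Fintype.linearCombination ℝ fun c => sin (n c * θ)) := by
    ext s
    simp only [LinearMap.mem_range, LinearMap.mem_ker, Fintype.linearCombination_apply,
      smul_eq_mul]
    constructor
    · rintro ⟨⟨x, hx⟩, rfl⟩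
      exact sum_mul_sin_eq_zero_of_mem_ker hleg hθ hn c₀ hx
    · intro hs
      obtain ⟨x, hx, hxs⟩ := exists_mem_ker_of_sum_mul_sin_eq_zero hleg hθ hn hs
      exact ⟨⟨x, hx⟩, funext hxs⟩
  rw [gMult, matMult, ← LinearMap.finrank_range_of_inj hinj, hrange]
  exact finrank_ker_linearCombination_add_one
    (sin_nat_mul_ne_zero_of_sin_succ_mul_eq_zero hθ (hn c₀))

end Eigenvectors

theorem stmt13_general (i m : ℕ) (hi1 : 1 ≤ i) (him : i ≤ m)
    (lam : ℝ) (hlam : lam = 2 * Real.cos (i * Real.pi / (m + 1)))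
    {V : Type*} [Fintype V] (T : SimpleGraph V) (hT : T.IsTree)
    (w : V) (hw : 3 ≤ deg T w)
    (hpaths : ∀ c : (T.induce {u | u ≠ w}).ConnectedComponent,
      ∃ n : ℕ, n ≡ m [MOD m + 1] ∧
        Nonempty (T.induce (compSupp T w c) ≃g SimpleGraph.pathGraph n) ∧
        ∀ v ∈ compSupp T w c, T.Adj w v →
          (T.neighborSet v ∩ compSupp T w c).ncard ≤ 1) :
    gMult T lam + 1 = deg T w ∧ pendCount T = deg T w := by
  choose n hmod hφ hend using hpaths
  choose ψ hleg using fun c => exists_isLeg hT (hφ c).some (hend c)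
  have hdeg := deg_center hleg
  obtain ⟨c₀⟩ : Nonempty (T.induce {u | u ≠ w}).ConnectedComponent :=
    Fintype.card_pos_iff.1 (by omega)
  have hsin : Real.sin (i * Real.pi / (m + 1)) ≠ 0 := by
    exact_mod_cast (Real.sin_nat_mul_pi_div_pos (d := m + 1) hi1 (by omega)).ne'
  have hn : ∀ c, Real.sin ((n c + 1 : ℕ) * (i * Real.pi / (m + 1))) = 0 := fun c => by
    have hdvd : m + 1 ∣ n c + 1 := Nat.modEq_zero_iff_dvd.1 <|
      ((hmod c).add_right 1).trans (Nat.modEq_zero_iff_dvd.2 dvd_rfl)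
    exact_mod_cast Real.sin_nat_mul_nat_mul_pi_div_eq_zero i hdvd
  refine ⟨?_, ?_⟩
  · rw [hlam, hdeg]
    exact gMult_add_one_eq_card hleg hsin hn c₀
  · rw [hdeg]
    exact pendCount_eq_card hleg (by omega)

/-- Base case of Theorem 1.3: a spider whose legs are paths on `nᵢ ≡ m (mod m+1)`
vertices, attached at endpoints, has `m(T, lam) = s - 1 = p(T) - 1`. -/
theorem stmt13 (i m : ℕ) (hi1 : 1 ≤ i) (him : i ≤ m) (hco : Nat.Coprime i (m + 1))
    (lam : ℝ) (hlam : lam = 2 * Real.cos (i * Real.pi / (m + 1)))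
    {V : Type*} [Fintype V] (T : SimpleGraph V) (hT : T.IsTree)
    (w : V) (hw : 3 ≤ deg T w) (huniq : ∀ u : V, 3 ≤ deg T u → u = w)
    (hpaths : ∀ c : (T.induce {u | u ≠ w}).ConnectedComponent,
      ∃ n : ℕ, n ≡ m [MOD m + 1] ∧
        Nonempty (T.induce (compSupp T w c) ≃g SimpleGraph.pathGraph n) ∧
        ∀ v ∈ compSupp T w c, T.Adj w v →
          (T.neighborSet v ∩ compSupp T w c).ncard ≤ 1) :
    gMult T lam + 1 = deg T w ∧ pendCount T = deg T w :=
  stmt13_general i m hi1 him lam hlam T hT w hw hpaths
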